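/- arXiv:2309.11990 — 6 statements merged into one kernel-verified Lean document; each statement's English description precedes it below -/
import Mathlib

section
/- Let A ⊆ ℝ and let C ⊆ ℝ \ A. Then the subspace topology that the Hattori topology τ(A) induces on C coincides with the subspace topology that the Sorgenfrey topology τ_S induces on C. -/
open Set TopologicalSpace Topology

/-- The Hattori topology τ(A) on ℝ: generated by the Euclidean open sets together with
all sets [x, x+ε) with x ∈ ℝ \ A and ε > 0. -/
def hattori (A : Set ℝ) : TopologicalSpace ℝ :=
  TopologicalSpace.generateFrom
    ({s : Set ℝ | IsOpen s} ∪ {s : Set ℝ | ∃ x ∉ A, ∃ ε > 0, s = Set.Ico x (x + ε)})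

/-- The Sorgenfrey (lower limit) topology on ℝ, with the half-open intervals
[a, b) as a base. -/
def sorgenfrey : TopologicalSpace ℝ :=
  TopologicalSpace.generateFrom {s : Set ℝ | ∃ a b : ℝ, s = Set.Ico a b}

/-- The Sorgenfrey topology refines the Hattori topology τ(A), for any A. -/
lemma sorg_le_hattori (A : Set ℝ) : sorgenfrey ≤ hattori A := by
  apply le_generateFrom
  rintro s (hs | ⟨x, -, ε, hε, rfl⟩)
  · -- Euclidean open sets are Sorgenfrey-open
    have h : ∀ x ∈ s, ∃ ε > 0, Ico x (x + ε) ⊆ s := by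
      intro x hx
      obtain ⟨ε, hε, hb⟩ := Metric.isOpen_iff.mp (show IsOpen s from hs) x hx
      refine ⟨ε, hε, fun y hy => hb ?_⟩
      simp only [Metric.mem_ball, Real.dist_eq, abs_lt]
      constructor <;> [linarith [hy.1, hε]; linarith [hy.2]]
    choose f hf hsub using h
    have hs' : s = ⋃ x : s, Ico (x : ℝ) ((x : ℝ) + f x x.2) := by
      ext y
      simp only [mem_iUnion]
      constructor
      · intro hy
        exact ⟨⟨y, hy⟩, by simp [hy, le_refl], by simpa using hf y hy⟩
      · rintro ⟨x, hx⟩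
        exact hsub x x.2 hx
    rw [hs']
    letI : TopologicalSpace ℝ := sorgenfrey
    exact isOpen_iUnion fun x => GenerateOpen.basic _ ⟨_, _, rfl⟩
  · exact GenerateOpen.basic _ ⟨x, x + ε, rfl⟩

/-- If A ⊆ ℝ and C ⊆ ℝ \ A, the subspace topology induced on C by the Hattori topology
τ(A) coincides with the subspace topology induced by the Sorgenfrey topology. -/
theorem hattori_subspace_eq_sorgenfrey (A C : Set ℝ) (hCA : C ⊆ Aᶜ) :
    TopologicalSpace.induced ((↑) : C → ℝ) (hattori A) =
      TopologicalSpace.induced ((↑) : C → ℝ) sorgenfrey := by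
  refine le_antisymm ?_ (induced_mono (sorg_le_hattori A))
  rw [sorgenfrey, induced_generateFrom_eq]
  apply le_generateFrom
  rintro s ⟨t, ⟨a, b, rfl⟩, rfl⟩
  letI : TopologicalSpace ℝ := hattori A
  letI : TopologicalSpace C := induced ((↑) : C → ℝ) (hattori A)
  rw [isOpen_induced_iff]
  refine ⟨⋃ c ∈ C ∩ Ico a b, Ico c b, ?_, ?_⟩
  · refine isOpen_biUnion fun c hc => ?_
    refine GenerateOpen.basic _ (Or.inr ⟨c, hCA hc.1, b - c, by linarith [hc.2.2, hc.2.1], ?_⟩)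
    ring_nf
  · ext ⟨x, hx⟩
    simp only [mem_preimage, mem_iUnion, mem_Ico, mem_inter_iff]
    constructor
    · rintro ⟨c, ⟨-, hca, -⟩, hcx, hxb⟩
      exact ⟨le_trans hca hcx, hxb⟩
    · rintro ⟨hax, hxb⟩
      exact ⟨x, ⟨hx, hax, hxb⟩, le_refl _, hxb⟩
end

section
/- For an arbitrary subset A of ℝ, if the space H(A) is σ-compact, then ℝ \ A is countable and ℝ \ A is nowhere dense in H(A). -/
/-! The topology τ(A) refines the Euclidean one, so τ(A)-compact sets are compact, hence closed,
in ℝ. If `K` is τ(A)-compact and `x ∉ A`, then `Ici x` is τ(A)-open, so `K \ Ici x` is closed in ℝ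
and `x` is not a limit of `K` from the left. Hence every point of `Aᶜ` has a left gap in each set
of a compact cover, which makes `Aᶜ` countable and keeps it out of the Euclidean interiors of the
cover sets. By Baire these interiors have dense union, so `interior A` is dense in ℝ, and then
also in τ(A), because every nonempty τ(A)-open set contains a nondegenerate interval `[x, x + ε)`.
-/

open Set TopologicalSpace Topology

open Filter

section Hattori

variable {A : Set ℝ}

lemma isOpen_hattori_of_isOpen {U : Set ℝ} (hU : IsOpen U) : IsOpen[hattori A] U :=
  .basic U (.inl hU)

lemma isOpen_hattori_Ico {x : ℝ} (hx : x ∉ A) {ε : ℝ} (hε : 0 < ε) :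
    IsOpen[hattori A] (Ico x (x + ε)) :=
  .basic _ (.inr ⟨x, hx, ε, hε, rfl⟩)

lemma hattori_le : hattori A ≤ (inferInstance : TopologicalSpace ℝ) :=
  fun _ hU => isOpen_hattori_of_isOpen hU

lemma isOpen_hattori_Ici {x : ℝ} (hx : x ∉ A) : IsOpen[hattori A] (Ici x) := by
  have hIci : Ici x = Ico x (x + 1) ∪ Ioi x := by
    ext y
    simp only [mem_Ici, mem_union, mem_Ico, mem_Ioi]
    constructor
    · intro hxy
      exact (lt_or_ge y (x + 1)).imp (⟨hxy, ·⟩) fun h => by linarith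
    · rintro (⟨hxy, -⟩ | hxy) <;> linarith
  rw [hIci]
  exact @IsOpen.union ℝ _ _ (hattori A) (isOpen_hattori_Ico hx one_pos)
    (isOpen_hattori_of_isOpen isOpen_Ioi)

lemma nhdsGE_le_nhds_hattori (x : ℝ) : 𝓝[≥] x ≤ @nhds ℝ (hattori A) x := by
  refine tendsto_id'.1 <| (tendsto_nhds_generateFrom_iff (m := id)).2 ?_
  rintro s (hs | ⟨y, -, ε, -, rfl⟩) hxs
  · exact mem_nhdsWithin_of_mem_nhds (IsOpen.mem_nhds hs hxs)
  · exact Ico_mem_nhdsGE_of_mem hxs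

lemma dense_hattori_of_dense {s : Set ℝ} (hs : Dense s) : @Dense ℝ (hattori A) s := by
  refine (@dense_iff_inter_open ℝ (hattori A) s).2 fun U hU ⟨x, hxU⟩ => ?_
  obtain ⟨u, hxu, hIco⟩ :=
    mem_nhdsGE_iff_exists_Ico_subset.1 <|
      nhdsGE_le_nhds_hattori x (@IsOpen.mem_nhds ℝ (hattori A) _ _ hU hxU)
  obtain ⟨y, hyIoo, hys⟩ := hs.inter_open_nonempty _ isOpen_Ioo (nonempty_Ioo.2 hxu)
  exact ⟨y, hIco (Ioo_subset_Ico_self hyIoo), hys⟩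

lemma IsCompact.of_hattori {K : Set ℝ} (hK : @IsCompact ℝ (hattori A) K) : IsCompact K := by
  simpa using @IsCompact.image ℝ ℝ (hattori A) _ K id hK (continuous_id_of_le hattori_le)

lemma IsCompact.exists_gap_left_of_hattori {K : Set ℝ} (hK : @IsCompact ℝ (hattori A) K)
    {x : ℝ} (hx : x ∉ A) : ∃ z < x, ∀ y ∈ K, y < x → y ≤ z := by
  have hclosed : IsClosed (K \ Ici x) :=
    (@IsCompact.diff ℝ (hattori A) _ _ hK (isOpen_hattori_Ici hx)).of_hattori.isClosed
  have hnhds : (K \ Ici x)ᶜ ∈ 𝓝[<] x :=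
    mem_nhdsWithin_of_mem_nhds (hclosed.isOpen_compl.mem_nhds fun h => h.2 (mem_Ici.2 le_rfl))
  obtain ⟨z, hzx, hz⟩ := mem_nhdsLT_iff_exists_Ioo_subset.1 hnhds
  exact ⟨z, hzx, fun y hyK hyx => not_lt.1 fun hzy => hz ⟨hzy, hyx⟩ ⟨hyK, not_le.2 hyx⟩⟩

lemma IsCompact.countable_inter_compl_of_hattori {K : Set ℝ}
    (hK : @IsCompact ℝ (hattori A) K) : (K ∩ Aᶜ).Countable := by
  refine (countable_image_lt_image_Iio_within (K ∩ Aᶜ) id).mono fun x hx => ?_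
  obtain ⟨z, hzx, hz⟩ := hK.exists_gap_left_of_hattori hx.2
  exact ⟨hx, z, hzx, fun y hy => hz y hy.1⟩

lemma IsCompact.interior_subset_of_hattori {K : Set ℝ} (hK : @IsCompact ℝ (hattori A) K) :
    interior K ⊆ A := by
  intro x hxK
  by_contra hxA
  obtain ⟨z, hzx, hz⟩ := hK.exists_gap_left_of_hattori hxA
  obtain ⟨y, hyK, hzy, hyx⟩ := Filter.nonempty_of_mem <|
    inter_mem (mem_nhdsWithin_of_mem_nhds (mem_interior_iff_mem_nhds.1 hxK)) (Ioo_mem_nhdsLT hzx)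
  exact (hz y hyK hyx).not_gt hzy

lemma countable_compl_of_sigmaCompactSpace_hattori (h : @SigmaCompactSpace ℝ (hattori A)) :
    Aᶜ.Countable := by
  obtain ⟨K, hK, hcover⟩ := h.isSigmaCompact_univ
  rw [← univ_inter Aᶜ, ← hcover, iUnion_inter]
  exact countable_iUnion fun n => (hK n).countable_inter_compl_of_hattori

lemma dense_interior_of_sigmaCompactSpace_hattori (h : @SigmaCompactSpace ℝ (hattori A)) :
    Dense (interior A) := by
  obtain ⟨K, hK, hcover⟩ := h.isSigmaCompact_univ
  refine (dense_iUnion_interior_of_closed (fun n => (hK n).of_hattori.isClosed) hcover).mono ?_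
  exact iUnion_subset fun n =>
    interior_maximal (hK n).interior_subset_of_hattori isOpen_interior

lemma isNowhereDense_compl_hattori (hA : Dense (interior A)) :
    @IsNowhereDense ℝ (hattori A) Aᶜ := by
  have hopen : IsOpen[hattori A] (interior A)ᶜᶜ := by
    rw [compl_compl]
    exact isOpen_hattori_of_isOpen isOpen_interior
  have hdense : @Dense ℝ (hattori A) (interior A)ᶜᶜ := by
    rw [compl_compl]
    exact dense_hattori_of_dense hA
  exact @IsNowhereDense.mono ℝ (hattori A) _ _ (compl_subset_compl.2 interior_subset)
    ((@isClosed_isNowhereDense_iff_compl ℝ (hattori A) _).2 ⟨hopen, hdense⟩).2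

end Hattori

/-- If H(A) is σ-compact then ℝ \ A is countable and nowhere dense in H(A). -/
theorem countable_nowhereDense_compl_of_sigmaCompact (A : Set ℝ)
    (h : @SigmaCompactSpace ℝ (hattori A)) :
    (Aᶜ).Countable ∧ @IsNowhereDense ℝ (hattori A) Aᶜ :=
  ⟨countable_compl_of_sigmaCompactSpace_hattori h,
    isNowhereDense_compl_hattori (dense_interior_of_sigmaCompactSpace_hattori h)⟩
end

section
/- For any subset A of ℝ, if ℝ \ A is countable and ℝ \ A is scattered as a subset of ℝ with the Euclidean topology, then H(A) is σ-compact. -/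
open Set TopologicalSpace Topology

/-- A set `S` is scattered (w.r.t. a topology `t`) if every nonempty subset `T ⊆ S`
has a point isolated in `T` with the subspace topology. -/
def ScatteredIn {X : Type*} (t : TopologicalSpace X) (S : Set X) : Prop :=
  ∀ T ⊆ S, T.Nonempty → ∃ x ∈ T, ∃ U, IsOpen[t] U ∧ U ∩ T = {x}

/-!
Write `B = ℝ \ A`. A Euclidean compact set `K` with a gap `(b - r, b)` to the left of each
`b ∈ K ∩ B` is compact in `H(A)`: at such `b` the Hattori neighbourhood filter `𝓝[≥] b` and the
Euclidean one `𝓝 b` trace the same filter on `K`.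

Ranking the scattered set `B` by its Cantor–Bendixson rank, choose `ρ b > 0` so that no point of
rank `≥ rank b` other than `b` is `ρ b`-close to `b`. If `x` lies in both `(b - ρ b, b)` and
`(c - ρ c, c)` with `rank b ≤ rank c`, then `c - x > 2 (b - x)`, so each `x` lies in only
finitely many of these intervals. Shrinking every gap to `min (ρ b) (1 / (n + 1))` with `n`
large therefore frees `x`, and `ℝ` is the union over `m, n` of the compact sets
`[-m, m] \ ⋃ b ∈ B, (b - min (ρ b) (1 / (n + 1)), b)`.
-/

open Filter OrdinalApprox

universe u

namespace ScatteredIn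

variable {X : Type u} [TopologicalSpace X] {B : Set X}

theorem eq_empty_of_preperfect (hB : ScatteredIn ‹_› B) {T : Set X} (hTB : T ⊆ B)
    (hT : Preperfect T) : T = ∅ := by
  by_contra hne
  obtain ⟨x, hx, U, hU, hUT⟩ := hB T hTB (nonempty_iff_ne_empty.2 hne)
  obtain ⟨y, hy, hyx⟩ := accPt_iff_nhds.1 (hT x hx) U (hU.mem_nhds (hUT.ge rfl).1)
  exact hyx (hUT.le hy)

/-- `rk b` is the first stage of the Cantor–Bendixson sequence `gfpApprox relDerivedSet B` in
which `b` is isolated; the sequence ends in a preperfect subset of `B`, hence in `∅`. -/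
theorem exists_rank (hB : ScatteredIn ‹_› B) :
    ∃ rk : X → Ordinal.{u}, ∀ b ∈ B, ∃ U ∈ 𝓝 b, ∀ c ∈ B ∩ U, c ≠ b → rk c < rk b := by
  set G := gfpApprox relDerivedSet B
  have hkernel : G (Order.succ (Cardinal.mk (Set X))).ord = ∅ := by
    refine hB.eq_empty_of_preperfect (gfpApprox_le _) (preperfect_iff_eq_relDerivedSet.2 ?_)
    exact (gfpApprox_ord_mem_fixedPoint relDerivedSet relDerivedSet_subset).symm
  set rk : X → Ordinal := fun b => sInf {a | b ∉ relDerivedSet (G a)}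
  have hrk : ∀ b ∈ B, b ∈ G (rk b) ∧ b ∉ derivedSet (G (rk b)) := by
    intro b hb
    have hne : {a | b ∉ relDerivedSet (G a)}.Nonempty :=
      ⟨_, fun h => hkernel.subset (relDerivedSet_subset h)⟩
    have hmem : b ∈ G (rk b) := by
      change b ∈ gfpApprox relDerivedSet B (rk b)
      rw [gfpApprox.eq_1]
      exact ⟨hb, mem_iInter₂.2 fun a ha => not_not.1 (notMem_of_lt_csInf' ha)⟩
    exact ⟨hmem, fun hder => csInf_mem hne ⟨hder, hmem⟩⟩
  refine ⟨rk, fun b hb => ?_⟩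
  obtain ⟨U, hU, hUG⟩ : ∃ U ∈ 𝓝 b, ∀ y ∈ U ∩ G (rk b), y = b := by
    simpa [mem_derivedSet, accPt_iff_nhds] using (hrk b hb).2
  refine ⟨U, hU, fun c ⟨hcB, hcU⟩ hcb => lt_of_not_ge fun hle => hcb (hUG c ⟨hcU, ?_⟩)⟩
  exact gfpApprox_anti_right relDerivedSet hle (hrk c hcB).1

end ScatteredIn

theorem finite_of_subset_Icc_of_lacunary {K : Type*} [Field K] [LinearOrder K]
    [IsStrictOrderedRing K] [FloorSemiring K] {S : Set K} {ε M : K} (hε : 0 < ε)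
    (hS : S ⊆ Icc ε M) (hlac : ∀ s ∈ S, ∀ t ∈ S, s < t → 2 * s < t) : S.Finite := by
  refine Finite.of_finite_image (f := Int.log 2)
    ((finite_Icc (Int.log 2 ε) (Int.log 2 M)).subset ?_) ?_
  · rintro _ ⟨s, hs, rfl⟩
    exact ⟨Int.log_mono_right hε (hS hs).1, Int.log_mono_right (hε.trans_le (hS hs).1) (hS hs).2⟩
  · intro s hs t ht hlog
    by_contra hne
    wlog hst : s < t generalizing s t
    · exact this ht hs hlog.symm (Ne.symm hne) (lt_of_le_of_ne (not_lt.1 hst) (Ne.symm hne))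
    -- `s` and `t` lie in the same dyadic band `[2 ^ k, 2 ^ (k + 1))`
    have h1 := Int.zpow_log_le_self (b := 2) one_lt_two (hε.trans_le (hS hs).1)
    have h2 := Int.lt_zpow_succ_log_self (b := 2) one_lt_two t
    push_cast at h1 h2
    rw [← hlog, zpow_add_one₀ two_ne_zero] at h2
    linarith [hlac s hs t ht hst]

theorem ScatteredIn.exists_radius_finite_mem_Ioo {B : Set ℝ}
    (hB : ScatteredIn (inferInstance : TopologicalSpace ℝ) B) :
    ∃ ρ : ℝ → ℝ, (∀ b ∈ B, 0 < ρ b) ∧ ∀ x, {b ∈ B | x ∈ Ioo (b - ρ b) b}.Finite := by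
  obtain ⟨rk, hrk⟩ := hB.exists_rank
  have hδ : ∀ b ∈ B, ∃ δ, 0 < δ ∧ δ ≤ 1 ∧ ∀ c ∈ B, c ≠ b → rk b ≤ rk c → δ ≤ |c - b| := by
    intro b hb
    obtain ⟨U, hU, hUrk⟩ := hrk b hb
    obtain ⟨δ, hδ, hball⟩ := Metric.mem_nhds_iff.1 hU
    refine ⟨min δ 1, lt_min hδ one_pos, min_le_right _ _, fun c hc hcb hle => ?_⟩
    by_contra! hlt
    have hcU : c ∈ U := hball (by rw [Metric.mem_ball, Real.dist_eq]; linarith [min_le_left δ 1])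
    exact (hUrk c ⟨hc, hcU⟩ hcb).not_ge hle
  choose! ρ hρ0 hρ1 hsep using hδ
  refine ⟨ρ, hρ0, fun x => ?_⟩
  set V := {b ∈ B | x ∈ Ioo (b - ρ b) b}
  have hcloser : ∀ b ∈ V, ∀ c ∈ V, c ≠ b → rk b ≤ rk c → 2 * (b - x) < c - x := by
    rintro b ⟨hb, hbx, hxb⟩ c ⟨hc, -, hxc⟩ hcb hle
    have := hsep b hb c hc hcb hle
    rcases abs_cases (c - b) with h | h <;> linarith
  rcases V.eq_empty_or_nonempty with hV | hV
  · exact hV ▸ finite_empty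
  obtain ⟨b₀, hb₀, hmin⟩ := (InvImage.wf rk wellFounded_lt).has_min V hV
  have hlow : ∀ c ∈ V, b₀ - x ≤ c - x := by
    intro c hc
    rcases eq_or_ne c b₀ with rfl | hcb
    · rfl
    · linarith [hcloser b₀ hb₀ c hc hcb (not_lt.1 (hmin c hc)), hb₀.2.2]
  refine Finite.of_finite_image (f := (· - x)) ?_ sub_left_injective.injOn
  refine finite_of_subset_Icc_of_lacunary (M := 1) (sub_pos.2 hb₀.2.2) ?_ ?_
  · rintro _ ⟨c, hc, rfl⟩
    exact ⟨hlow c hc, by linarith [hc.2.1, hρ1 c hc.1]⟩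
  · rintro _ ⟨b, hb, rfl⟩ _ ⟨c, hc, rfl⟩ hlt
    dsimp only at hlt ⊢
    have hcb : c ≠ b := by rintro rfl; exact lt_irrefl _ hlt
    rcases le_total (rk b) (rk c) with hle | hle
    · exact hcloser b hb c hc hcb hle
    · linarith [hcloser c hc b hb hcb.symm hle]

namespace Hattori

variable {A : Set ℝ}

theorem nhdsGE_le_nhds (x : ℝ) : 𝓝[≥] x ≤ @nhds ℝ (hattori A) x := by
  rw [hattori, nhds_generateFrom]
  refine le_iInf₂ fun s ⟨hxs, hs⟩ => le_principal_iff.2 ?_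
  rcases hs with hs | ⟨a, -, ε, -, rfl⟩
  · exact mem_nhdsWithin_of_mem_nhds (IsOpen.mem_nhds hs hxs)
  · exact Ico_mem_nhdsGE_of_mem hxs

theorem nhds_le_nhds_of_mem {x : ℝ} (hx : x ∈ A) : 𝓝 x ≤ @nhds ℝ (hattori A) x := by
  rw [hattori, nhds_generateFrom]
  refine le_iInf₂ fun s ⟨hxs, hs⟩ => le_principal_iff.2 ?_
  rcases hs with hs | ⟨a, ha, ε, -, rfl⟩
  · exact IsOpen.mem_nhds hs hxs
  · exact Ico_mem_nhds (lt_of_le_of_ne hxs.1 (by rintro rfl; exact ha hx)) hxs.2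

theorem isCompact_of_disjoint_nhdsLT {K : Set ℝ} (hK : IsCompact K)
    (hgap : ∀ b ∈ K, b ∉ A → Disjoint (𝓝[<] b) (𝓟 K)) : @IsCompact ℝ (hattori A) K := by
  intro f hf hfK
  obtain ⟨x, hxK, hx⟩ := hK hfK
  refine ⟨x, hxK, show NeBot (@nhds ℝ (hattori A) x ⊓ f) from ?_⟩
  refine hx.neBot.mono (le_inf ?_ inf_le_right)
  calc 𝓝 x ⊓ f ≤ 𝓝 x ⊓ 𝓟 K := inf_le_inf_left _ hfK
    _ ≤ @nhds ℝ (hattori A) x := by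
      by_cases hxA : x ∈ A
      · exact inf_le_left.trans (nhds_le_nhds_of_mem hxA)
      · rw [← nhdsLT_sup_nhdsGE, inf_sup_right, (hgap x hxK hxA).eq_bot, bot_sup_eq]
        exact inf_le_left.trans (nhdsGE_le_nhds x)

theorem isCompact_Icc_diff_iUnion_Ioo {r : ℝ → ℝ} (hr : ∀ b ∈ Aᶜ, 0 < r b) (a c : ℝ) :
    @IsCompact ℝ (hattori A) (Icc a c \ ⋃ b ∈ Aᶜ, Ioo (b - r b) b) := by
  refine isCompact_of_disjoint_nhdsLT ?_ fun b _ hb => ?_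
  · exact isCompact_Icc.diff (isOpen_biUnion fun b _ => isOpen_Ioo)
  · refine disjoint_principal_right.2 (mem_of_superset (Ioo_mem_nhdsLT (sub_lt_self b (hr b hb)))
      fun y hy hyK => hyK.2 (mem_biUnion hb hy))

end Hattori

theorem sigmaCompact_of_countable_scattered_in_euclidean_general (A : Set ℝ)
    (hscat : ScatteredIn (inferInstance : TopologicalSpace ℝ) Aᶜ) :
    @SigmaCompactSpace ℝ (hattori A) := by
  obtain ⟨ρ, hρ, hfin⟩ := hscat.exists_radius_finite_mem_Ioo
  have hcover : ⋃ (m : ℕ) (n : ℕ),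
      Icc (-m : ℝ) m \ ⋃ b ∈ Aᶜ, Ioo (b - min (ρ b) (1 / (n + 1))) b = univ := by
    refine eq_univ_of_forall fun x => ?_
    obtain ⟨n, hn⟩ : ∃ n : ℕ, ∀ b ∈ {b ∈ Aᶜ | x ∈ Ioo (b - ρ b) b}, 1 / ((n : ℝ) + 1) < b - x :=
      ((hfin x).eventually_all.2 fun b hb =>
        tendsto_one_div_add_atTop_nhds_zero_nat.eventually (gt_mem_nhds (sub_pos.2 hb.2.2))).exists
    refine mem_iUnion₂.2 ⟨⌈|x|⌉₊, n, abs_le.1 (Nat.le_ceil |x|), fun hx => ?_⟩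
    obtain ⟨b, hb, hxb⟩ := mem_iUnion₂.1 hx
    have hgap := hn b ⟨hb, by linarith [min_le_left (ρ b) (1 / (n + 1)), hxb.1], hxb.2⟩
    linarith [min_le_right (ρ b) (1 / (n + 1)), hxb.1]
  let _ : TopologicalSpace ℝ := hattori A
  rw [← isSigmaCompact_univ_iff, ← hcover]
  exact isSigmaCompact_iUnion _ fun m => isSigmaCompact_iUnion_of_isCompact _ fun n =>
    Hattori.isCompact_Icc_diff_iUnion_Ioo (fun b hb => lt_min (hρ b hb) Nat.one_div_pos_of_nat) _ _

/-- If ℝ \ A is countable and scattered in the Euclidean real line,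
then H(A) is σ-compact. -/
theorem sigmaCompact_of_countable_scattered_in_euclidean (A : Set ℝ)
    (hcount : (Aᶜ).Countable)
    (hscat : ScatteredIn (inferInstance : TopologicalSpace ℝ) Aᶜ) :
    @SigmaCompactSpace ℝ (hattori A) :=
  sigmaCompact_of_countable_scattered_in_euclidean_general A hscat
end

section
/- Let A ⊆ ℝ and B = ℝ \ A. If the closure of B in the space H(A) is a σ-compact subset of H(A), then H(A) is σ-compact. -/
/-!
The complement `U` of the closure of `B` is open in `H(A)` and contained in `A`. At points of `A`
the Hattori neighbourhoods are the Euclidean ones, so `U` is Euclidean-open, hence a σ-compact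
subset of `ℝ`, and Euclidean-compact subsets of `A` stay compact in `H(A)`. Thus `ℝ` is the union
of the two σ-compact sets `closure B` and `U`.
-/

open Set TopologicalSpace Topology

open Filter

lemma IsCompact.of_nhds_le {X : Type*} {t t' : TopologicalSpace X} {K : Set X}
    (hK : @IsCompact X t' K) (h : ∀ x ∈ K, @nhds X t' x ≤ @nhds X t x) : @IsCompact X t K := by
  intro f _ hfK
  obtain ⟨x, hxK, hx⟩ := hK hfK
  exact ⟨x, hxK, NeBot.mono hx (inf_le_inf_right f (h x hxK))⟩

lemma IsOpen.isSigmaCompact {X : Type*} [TopologicalSpace X] [SecondCountableTopology X]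
    [LocallyCompactSpace X] {U : Set X} (hU : IsOpen U) : IsSigmaCompact U := by
  have := hU.locallyCompactSpace
  exact isSigmaCompact_iff_sigmaCompactSpace.2 inferInstance

lemma IsSigmaCompact.union {X : Type*} [TopologicalSpace X] {s t : Set X}
    (hs : IsSigmaCompact s) (ht : IsSigmaCompact t) : IsSigmaCompact (s ∪ t) := by
  rw [union_eq_iUnion]
  exact isSigmaCompact_iUnion _ fun b => by cases b <;> assumption

lemma nhds_le_nhds_hattori {A : Set ℝ} {x : ℝ} (hx : x ∈ A) : 𝓝 x ≤ @nhds ℝ (hattori A) x := by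
  rw [hattori, nhds_generateFrom]
  refine le_iInf₂ fun s ⟨hxs, hs⟩ => le_principal_iff.2 ?_
  rcases hs with hs | ⟨y, hyA, ε, -, rfl⟩
  · exact IsOpen.mem_nhds hs hxs
  · have hyx : y < x := hxs.1.lt_of_ne (ne_of_mem_of_not_mem hx hyA).symm
    exact mem_of_superset (Ioo_mem_nhds hyx hxs.2) Ioo_subset_Ico_self

lemma isOpen_of_subset_of_isOpen_hattori {A U : Set ℝ} (hUA : U ⊆ A)
    (hU : IsOpen[hattori A] U) : IsOpen U :=
  isOpen_iff_mem_nhds.2 fun _ hx =>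
    nhds_le_nhds_hattori (hUA hx) (@IsOpen.mem_nhds ℝ (hattori A) _ _ hU hx)

lemma IsSigmaCompact.hattori_of_subset {A S : Set ℝ} (hSA : S ⊆ A) (hS : IsSigmaCompact S) :
    @IsSigmaCompact ℝ (hattori A) S := by
  obtain ⟨K, hK, rfl⟩ := hS
  exact ⟨K, fun n => (hK n).of_nhds_le fun x hx =>
    nhds_le_nhds_hattori (hSA (mem_iUnion_of_mem n hx)), rfl⟩

/-- If the closure of B = ℝ \ A in H(A) is a σ-compact subset of H(A),
then H(A) is σ-compact. -/
theorem sigmaCompact_of_sigmaCompact_closure_compl (A B : Set ℝ) (hB : B = Aᶜ)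
    (h : @IsSigmaCompact ℝ (hattori A) (closure[hattori A] B)) :
    @SigmaCompactSpace ℝ (hattori A) := by
  have hCA : (closure[hattori A] B)ᶜ ⊆ A := fun x hx => by
    by_contra hxA
    exact hx (@subset_closure ℝ (hattori A) B x (hB ▸ hxA))
  have hC_open : IsOpen[hattori A] (closure[hattori A] B)ᶜ :=
    (@isClosed_closure ℝ (hattori A) B).isOpen_compl
  have hC : @IsSigmaCompact ℝ (hattori A) (closure[hattori A] B)ᶜ :=
    (isOpen_of_subset_of_isOpen_hattori hCA hC_open).isSigmaCompact.hattori_of_subset hCA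
  rw [← @isSigmaCompact_univ_iff ℝ (hattori A), ← union_compl_self (closure[hattori A] B)]
  exact @IsSigmaCompact.union ℝ (hattori A) _ _ h hC
end

section
/- For any subsets Y, A ⊆ ℝ: Y is nowhere dense in ℝ with the Euclidean topology if and only if Y is nowhere dense in the space H(A). -/
open Set TopologicalSpace Topology

lemma nwd_iff_aux {X : Type*} [TopologicalSpace X] (Y : Set X) :
    IsNowhereDense Y ↔ ∀ U : Set X, IsOpen U → U.Nonempty →
      ∃ V : Set X, IsOpen V ∧ V.Nonempty ∧ V ⊆ U ∧ V ∩ Y = ∅ := by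
  constructor
  · intro h U hU hUne
    refine ⟨U \ closure Y, hU.sdiff isClosed_closure, ?_, diff_subset, ?_⟩
    · rcases (U \ closure Y).eq_empty_or_nonempty with he | hne
      · exfalso
        have hsub : U ⊆ closure Y := by
          intro x hx
          by_contra hc
          exact (Set.eq_empty_iff_forall_notMem.mp he x) ⟨hx, hc⟩
        have : U ⊆ interior (closure Y) := interior_maximal hsub hU
        rw [h] at this
        exact hUne.not_subset_empty this
      · exact hne
    · apply Set.eq_empty_iff_forall_notMem.mpr
      rintro x ⟨⟨_, hxc⟩, hxY⟩
      exact hxc (subset_closure hxY)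
  · intro h
    rw [IsNowhereDense]
    by_contra hne
    obtain ⟨x, hx⟩ := Set.nonempty_iff_ne_empty.mpr hne
    obtain ⟨V, hVo, ⟨y, hy⟩, hVsub, hVY⟩ :=
      h (interior (closure Y)) isOpen_interior ⟨x, hx⟩
    have hyc : y ∈ closure Y := interior_subset (hVsub hy)
    obtain ⟨z, hzV, hzY⟩ := (mem_closure_iff.mp hyc) V hVo hy
    exact (Set.eq_empty_iff_forall_notMem.mp hVY z) ⟨hzV, hzY⟩

lemma hattori_open_ico (A : Set ℝ) (U : Set ℝ)
    (hU : TopologicalSpace.GenerateOpen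
      ({s : Set ℝ | IsOpen s} ∪ {s : Set ℝ | ∃ x ∉ A, ∃ ε > 0, s = Set.Ico x (x + ε)}) U) :
    ∀ x ∈ U, ∃ ε > 0, Set.Ico x (x + ε) ⊆ U := by
  induction hU with
  | basic s hs =>
    intro x hx
    simp only [Set.mem_union, Set.mem_setOf_eq] at hs
    rcases hs with hs | ⟨a, _, ε, hε, rfl⟩
    · obtain ⟨δ, hδ, hball⟩ := Metric.isOpen_iff.mp hs x hx
      refine ⟨δ, hδ, fun y hy => hball ?_⟩
      rw [Metric.mem_ball, Real.dist_eq, abs_lt]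
      constructor <;> [linarith [hy.1]; linarith [hy.2]]
    · refine ⟨a + ε - x, by linarith [hx.2], fun y hy => ⟨le_trans hx.1 hy.1, by linarith [hy.2]⟩⟩
  | univ => exact fun x _ => ⟨1, one_pos, fun y _ => trivial⟩
  | inter s t _ _ ihs iht =>
    intro x hx
    obtain ⟨ε₁, hε₁, h₁⟩ := ihs x hx.1
    obtain ⟨ε₂, hε₂, h₂⟩ := iht x hx.2
    refine ⟨min ε₁ ε₂, lt_min hε₁ hε₂, fun y hy => ⟨h₁ ⟨hy.1, ?_⟩, h₂ ⟨hy.1, ?_⟩⟩⟩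
    · exact lt_of_lt_of_le hy.2 (by simp [min_le_left])
    · exact lt_of_lt_of_le hy.2 (by simp [min_le_right])
  | sUnion S _ ih =>
    rintro x ⟨s, hsS, hxs⟩
    obtain ⟨ε, hε, h⟩ := ih s hsS x hxs
    exact ⟨ε, hε, fun y hy => ⟨s, hsS, h hy⟩⟩

lemma euclid_open_hattori (A : Set ℝ) (U : Set ℝ) (hU : IsOpen U) :
    @IsOpen ℝ (hattori A) U :=
  TopologicalSpace.GenerateOpen.basic U (Or.inl hU)

/-- Y ⊆ ℝ is nowhere dense in the Euclidean real line iff it is nowhere dense in H(A). -/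
theorem isNowhereDense_euclidean_iff_hattori (Y A : Set ℝ) :
    IsNowhereDense Y ↔ @IsNowhereDense ℝ (hattori A) Y := by
  rw [nwd_iff_aux, @nwd_iff_aux ℝ (hattori A)]
  constructor
  · intro h U hUopen hUne
    obtain ⟨x, hx⟩ := hUne
    obtain ⟨ε, hε, hIco⟩ := hattori_open_ico A U hUopen x hx
    have hIoo : Set.Ioo x (x + ε) ⊆ U := Set.Ioo_subset_Ico_self.trans hIco
    obtain ⟨V, hVo, hVne, hVsub, hVY⟩ :=
      h (Set.Ioo x (x + ε)) isOpen_Ioo (by simp [hε])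
    exact ⟨V, euclid_open_hattori A V hVo, hVne, hVsub.trans hIoo, hVY⟩
  · intro h U hUopen hUne
    obtain ⟨V, hVo, hVne, hVsub, hVY⟩ := h U (euclid_open_hattori A U hUopen) hUne
    obtain ⟨x, hx⟩ := hVne
    obtain ⟨ε, hε, hIco⟩ := hattori_open_ico A V hVo x hx
    refine ⟨Set.Ioo x (x + ε), isOpen_Ioo, by simp [hε],
      (Set.Ioo_subset_Ico_self.trans hIco).trans hVsub, ?_⟩
    apply Set.eq_empty_iff_forall_notMem.mpr
    intro z hz
    exact (Set.eq_empty_iff_forall_notMem.mp hVY z)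
      ⟨hIco (Set.Ioo_subset_Ico_self hz.1), hz.2⟩
end

section
/- The space H(A₁) is σ-compact, yet the set B₁ = ℝ \ A₁ is not scattered as a subset of H(A₁). (Hence the implication 'ℝ \ A countable and scattered in H(A) implies H(A) σ-compact' is not invertible.) -/
open Set TopologicalSpace Topology

/-- `B₁`: the set of left endpoints of the closed intervals appearing in the standard
middle-thirds construction of the Cantor set. -/
def B1 : Set ℝ :=
  {x | ∃ n : ℕ, ∃ c : ℕ → ℝ, (∀ i, c i = 0 ∨ c i = 2) ∧
    x = ∑ i ∈ Finset.range n, c i / 3 ^ (i + 1)}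

/-- `A₁ = ℝ \ B₁`. -/
def A1 : Set ℝ := B1ᶜ

lemma zero_mem_B1 : (0:ℝ) ∈ B1 :=
  ⟨0, fun _ => 0, fun _ => Or.inl rfl, by simp⟩

lemma B1_countable : B1.Countable := by
  have h : B1 ⊆ Set.range ((↑) : ℚ → ℝ) := by
    rintro x ⟨n, c, hc, rfl⟩
    refine ⟨∑ i ∈ Finset.range n, (if c i = 2 then (2:ℚ) else 0) / 3 ^ (i + 1), ?_⟩
    push_cast
    refine Finset.sum_congr rfl fun i _ => ?_
    rcases hc i with h | h <;> simp [h]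
  exact (Set.countable_range _).mono h

lemma geom_tail (a : ℕ) : ∀ N, a ≤ N →
    ∑ i ∈ Finset.Ico a N, (2:ℝ)/3^(i+1) = 1/3^a - 1/3^N := by
  intro N
  induction N with
  | zero => intro h; simp [Nat.le_zero.mp h]
  | succ N ih =>
    intro h
    rcases Nat.lt_or_ge a (N+1) with h' | h'
    · have haN : a ≤ N := Nat.lt_succ_iff.mp h'
      rw [Finset.sum_Ico_succ_top haN, ih haN]
      have h3 : (3:ℝ)^(N+1) = 3^N * 3 := by ring
      field_simp
      ring
    · have : a = N + 1 := le_antisymm h h'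
      simp [this]


lemma sign_lemma (C D : ℕ → ℝ) (hC : ∀ i, C i = 0 ∨ C i = 2) (hD : ∀ i, D i = 0 ∨ D i = 2)
    (N k : ℕ) (hkN : k < N) (hlt : ∀ i < k, C i = D i) (hCk : C k = 2) (hDk : D k = 0) :
    1/3^(k+1) ≤ ∑ i ∈ Finset.range N, C i / 3 ^ (i + 1)
      - ∑ i ∈ Finset.range N, D i / 3 ^ (i + 1) := by
  have hsplit : ∑ i ∈ Finset.range N, C i / 3 ^ (i + 1)
      - ∑ i ∈ Finset.range N, D i / 3 ^ (i + 1)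
      = ∑ i ∈ Finset.Ico k N, (C i - D i) / 3 ^ (i + 1) := by
    rw [← Finset.sum_sub_distrib]
    rw [Finset.range_eq_Ico, ← Finset.sum_Ico_consecutive _ (Nat.zero_le k) (le_of_lt hkN)]
    have : ∑ i ∈ Finset.Ico 0 k, (C i / 3 ^ (i+1) - D i / 3 ^ (i+1)) = 0 := by
      apply Finset.sum_eq_zero
      intro i hi
      rw [Finset.mem_Ico] at hi
      rw [hlt i hi.2]; ring
    rw [this, zero_add]
    exact Finset.sum_congr rfl (fun i _ => by ring)
  rw [hsplit]
  have hk1N : k + 1 ≤ N := hkN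
  rw [← Finset.sum_Ico_consecutive _ (Nat.le_add_right k 1) hk1N]
  have h1 : ∑ i ∈ Finset.Ico k (k+1), (C i - D i) / 3 ^ (i + 1) = 2 / 3^(k+1) := by
    simp [hCk, hDk]
  rw [h1]
  have h2 : ∑ i ∈ Finset.Ico (k+1) N, (C i - D i) / 3 ^ (i + 1)
      ≥ - ∑ i ∈ Finset.Ico (k+1) N, (2:ℝ)/3^(i+1) := by
    rw [← Finset.sum_neg_distrib]
    apply Finset.sum_le_sum
    intro i _
    have h3 : (0:ℝ) < 3^(i+1) := by positivity
    have hnum : (-2:ℝ) ≤ C i - D i := by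
      rcases hC i with h|h <;> rcases hD i with h'|h' <;> rw [h, h'] <;> norm_num
    rw [show -((2:ℝ)/3^(i+1)) = (-2)/3^(i+1) by ring]
    gcongr
  have hg : ∑ i ∈ Finset.Ico (k+1) N, (2:ℝ)/3^(i+1) = 1/3^(k+1) - 1/3^N := by
    exact geom_tail (k+1) N hk1N
  rw [hg] at h2
  have h3 : (0:ℝ) < 3^N := by positivity
  have : (0:ℝ) < 1/3^N := by positivity
  have key : (2:ℝ)/3^(k+1) - 1/3^(k+1) = 1/3^(k+1) := by ring
  linarith

lemma B1_gap : ∀ s ∈ B1, ∃ γ > 0, ∀ b ∈ B1, b ∉ Set.Ioo (s - γ) s := by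
  rintro s ⟨n, c, hc, rfl⟩
  refine ⟨1/3^n, by positivity, ?_⟩
  rintro b ⟨m, d, hd, rfl⟩ hmem
  obtain ⟨h1, h2⟩ := hmem
  set N := max n m with hN
  set C : ℕ → ℝ := fun i => if i < n then c i else 0 with hCdef
  set D : ℕ → ℝ := fun i => if i < m then d i else 0 with hDdef
  have hC : ∀ i, C i = 0 ∨ C i = 2 := fun i => by
    by_cases h : i < n <;> simp [hCdef, h, hc i]
  have hD : ∀ i, D i = 0 ∨ D i = 2 := fun i => by
    by_cases h : i < m <;> simp [hDdef, h, hd i]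
  have hsum : ∀ (p : ℕ) (e : ℕ → ℝ), p ≤ N →
      ∑ i ∈ Finset.range N, (if i < p then e i else 0) / 3 ^ (i+1)
        = ∑ i ∈ Finset.range p, e i / 3 ^ (i + 1) := by
    intro p e hp
    rw [← Finset.sum_subset (Finset.range_subset_range.mpr hp)]
    · exact Finset.sum_congr rfl fun i hi => by
        rw [if_pos (Finset.mem_range.mp hi)]
    · intro i _ hi
      rw [if_neg (fun h => hi (Finset.mem_range.mpr h))]
      simp
  have hsC : ∑ i ∈ Finset.range N, C i / 3^(i+1) = ∑ i ∈ Finset.range n, c i / 3^(i+1) :=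
    hsum n c (le_max_left _ _)
  have hsD : ∑ i ∈ Finset.range N, D i / 3^(i+1) = ∑ i ∈ Finset.range m, d i / 3^(i+1) :=
    hsum m d (le_max_right _ _)
  have hne : ∃ i, C i ≠ D i := by
    by_contra h
    push_neg at h
    have : ∑ i ∈ Finset.range N, C i / 3^(i+1) = ∑ i ∈ Finset.range N, D i / 3^(i+1) :=
      Finset.sum_congr rfl fun i _ => by rw [h i]
    rw [hsC, hsD] at this
    exact absurd this (ne_of_gt h2)
  set k := Nat.find hne with hkdef
  have hk : C k ≠ D k := Nat.find_spec hne
  have hmin : ∀ i < k, C i = D i := fun i hi => of_not_not (Nat.find_min hne hi)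
  have hkN : k < N := by
    by_contra h
    push_neg at h
    have h1' : C k = 0 := by
      rw [hCdef]; simp only []
      rw [if_neg]; omega
    have h2' : D k = 0 := by
      rw [hDdef]; simp only []
      rw [if_neg]; omega
    exact hk (h1'.trans h2'.symm)
  rcases hC k with hCk | hCk <;> rcases hD k with hDk | hDk
  · exact hk (hCk.trans hDk.symm)
  · -- C k = 0, D k = 2 : b - s ≥ 1/3^(k+1) > 0 contradicts b < s
    have := sign_lemma D C hD hC N k hkN (fun i hi => (hmin i hi).symm) hDk hCk
    rw [hsC, hsD] at this
    have hpos : (0:ℝ) < 1/3^(k+1) := by positivity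
    linarith
  · -- C k = 2, D k = 0 : s - b ≥ 1/3^(k+1) ≥ 1/3^n
    have := sign_lemma C D hC hD N k hkN hmin hCk hDk
    rw [hsC, hsD] at this
    have hkn : k < n := by
      by_contra h
      push_neg at h
      have : C k = 0 := by rw [hCdef]; simp only []; rw [if_neg]; omega
      rw [this] at hCk; norm_num at hCk
    have hle : (1:ℝ)/3^n ≤ 1/3^(k+1) := by
      apply div_le_div_of_nonneg_left (by norm_num) (by positivity)
      exact pow_le_pow_right₀ (by norm_num) hkn
    linarith
  · exact hk (hCk.trans hDk.symm)

lemma hattori_open_Ico {U : Set ℝ} (h : IsOpen[hattori A1] U) :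
    ∀ x ∈ U, ∃ ε > 0, Set.Ico x (x + ε) ⊆ U := by
  change TopologicalSpace.GenerateOpen _ U at h
  induction h with
  | basic V hV =>
    intro x hx
    rcases hV with hV | ⟨y, _, ε, hε, rfl⟩
    · obtain ⟨ε, hε, hball⟩ := Metric.isOpen_iff.mp (show IsOpen V from hV) x hx
      refine ⟨ε, hε, fun z hz => hball ?_⟩
      rw [Real.ball_eq_Ioo]
      exact ⟨by linarith [hz.1], hz.2⟩
    · obtain ⟨hy1, hy2⟩ := hx
      refine ⟨y + ε - x, by linarith, fun z hz => ⟨le_trans hy1 hz.1, by linarith [hz.2]⟩⟩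
  | univ => exact fun x _ => ⟨1, one_pos, fun z _ => trivial⟩
  | inter V W _ _ ihV ihW =>
    intro x hx
    obtain ⟨ε1, hε1, h1⟩ := ihV x hx.1
    obtain ⟨ε2, hε2, h2⟩ := ihW x hx.2
    refine ⟨min ε1 ε2, lt_min hε1 hε2, fun z hz => ⟨h1 ⟨hz.1, ?_⟩, h2 ⟨hz.1, ?_⟩⟩⟩
    · exact lt_of_lt_of_le hz.2 (by simp [min_le_left])
    · exact lt_of_lt_of_le hz.2 (by simp [min_le_right])
  | sUnion S _ ih =>
    rintro x ⟨V, hV, hxV⟩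
    obtain ⟨ε, hε, hsub⟩ := ih V hV x hxV
    exact ⟨ε, hε, fun z hz => ⟨V, hV, hsub hz⟩⟩

lemma hattori_open_Ioo {U : Set ℝ} (h : IsOpen[hattori A1] U) :
    ∀ x ∈ U, x ∉ B1 → ∃ ε > 0, Set.Ioo (x - ε) (x + ε) ⊆ U := by
  change TopologicalSpace.GenerateOpen _ U at h
  induction h with
  | basic V hV =>
    intro x hx hxB
    rcases hV with hV | ⟨y, hy, ε, hε, rfl⟩
    · obtain ⟨ε, hε, hball⟩ := Metric.isOpen_iff.mp (show IsOpen V from hV) x hx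
      rw [Real.ball_eq_Ioo] at hball
      exact ⟨ε, hε, hball⟩
    · have hyB : y ∈ B1 := not_not.mp hy
      obtain ⟨hy1, hy2⟩ := hx
      have hxy : y < x := lt_of_le_of_ne hy1 (fun h => hxB (h ▸ hyB))
      refine ⟨min (x - y) (y + ε - x), lt_min (by linarith) (by linarith), fun z hz => ?_⟩
      obtain ⟨hz1, hz2⟩ := hz
      have := min_le_left (x - y) (y + ε - x)
      have := min_le_right (x - y) (y + ε - x)
      constructor <;> [skip; skip] <;> linarith
  | univ => exact fun x _ _ => ⟨1, one_pos, fun z _ => trivial⟩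
  | inter V W _ _ ihV ihW =>
    intro x hx hxB
    obtain ⟨ε1, hε1, h1⟩ := ihV x hx.1 hxB
    obtain ⟨ε2, hε2, h2⟩ := ihW x hx.2 hxB
    have hm1 := min_le_left ε1 ε2
    have hm2 := min_le_right ε1 ε2
    refine ⟨min ε1 ε2, lt_min hε1 hε2, fun z hz => ?_⟩
    obtain ⟨hz1, hz2⟩ := hz
    exact ⟨h1 ⟨by linarith, by linarith⟩, h2 ⟨by linarith, by linarith⟩⟩
  | sUnion S _ ih =>
    rintro x ⟨V, hV, hxV⟩ hxB
    obtain ⟨ε, hε, hsub⟩ := ih V hV x hxV hxB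
    exact ⟨ε, hε, fun z hz => ⟨V, hV, hsub hz⟩⟩

lemma hattori_compact_of_gaps {K : Set ℝ} (hK : IsCompact K)
    (hgap : ∀ s ∈ B1, ∃ δ > 0, K ∩ Set.Ioo (s - δ) s = ∅) :
    @IsCompact ℝ (hattori A1) K := by
  apply @isCompact_of_finite_subcover ℝ (hattori A1) K
  intro ι U hU hcov
  set W : ι → Set ℝ := fun i => ⋃₀ {V | IsOpen V ∧ V ∩ K ⊆ U i} with hW
  have hWopen : ∀ i, IsOpen (W i) := fun i => isOpen_sUnion fun V hV => hV.1
  have hWK : ∀ i, W i ∩ K ⊆ U i := by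
    rintro i z ⟨⟨V, ⟨hVo, hVs⟩, hzV⟩, hzK⟩
    exact hVs ⟨hzV, hzK⟩
  have hKW : K ⊆ ⋃ i, W i := by
    intro x hxK
    obtain ⟨i, hi⟩ := Set.mem_iUnion.mp (hcov hxK)
    refine Set.mem_iUnion.mpr ⟨i, ?_⟩
    by_cases hxB : x ∈ B1
    · obtain ⟨ε, hε, hIco⟩ := hattori_open_Ico (hU i) x hi
      obtain ⟨δ, hδ, hdisj⟩ := hgap x hxB
      refine ⟨Set.Ioo (x - δ) (x + ε), ⟨isOpen_Ioo, ?_⟩, by constructor <;> linarith⟩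
      rintro z ⟨⟨hz1, hz2⟩, hzK⟩
      rcases lt_or_ge z x with h | h
      · exact absurd (Set.mem_inter hzK (show z ∈ Set.Ioo (x - δ) x from ⟨hz1, h⟩)) (by rw [hdisj]; exact Set.notMem_empty z)
      · exact hIco ⟨h, hz2⟩
    · obtain ⟨ε, hε, hIoo⟩ := hattori_open_Ioo (hU i) x hi hxB
      exact ⟨Set.Ioo (x - ε) (x + ε), ⟨isOpen_Ioo, fun z hz => hIoo hz.1⟩,
        by constructor <;> linarith⟩
  obtain ⟨t, ht⟩ := hK.elim_finite_subcover W hWopen hKW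
  refine ⟨t, fun x hxK => ?_⟩
  obtain ⟨i, hit, hxW⟩ := Set.mem_iUnion₂.mp (ht hxK)
  exact Set.mem_iUnion₂.mpr ⟨i, hit, hWK i ⟨hxW, hxK⟩⟩

lemma B1_right_accum : ∀ x ∈ B1, ∀ ε > 0, ∃ y ∈ B1, x < y ∧ y < x + ε := by
  rintro x ⟨n, c, hc, rfl⟩ ε hε
  obtain ⟨j, hj⟩ := exists_pow_lt_of_lt_one (show (0:ℝ) < ε/2 by linarith)
    (show (1:ℝ)/3 < 1 by norm_num)
  set m := max n j with hm
  have hnm : n ≤ m := le_max_left _ _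
  have hjm : j ≤ m + 1 := le_trans (le_max_right n j) (Nat.le_succ m)
  have hsmall : 2/3^(m+1) < ε := by
    have h1 : ((1:ℝ)/3)^(m+1) ≤ (1/3)^j :=
      pow_le_pow_of_le_one (by norm_num) (by norm_num) hjm
    have h2 : ((1:ℝ)/3)^(m+1) = 1/3^(m+1) := by
      rw [div_pow]; norm_num
    rw [h2] at h1
    have : (1:ℝ)/3^(m+1) < ε/2 := lt_of_le_of_lt h1 hj
    have h4 : (2:ℝ)/3^(m+1) = 2*(1/3^(m+1)) := by ring
    linarith
  set c' : ℕ → ℝ := fun i => if i < n then c i else if i = m then 2 else 0 with hc'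
  have hval : ∀ i, c' i = if i < n then c i else if i = m then 2 else 0 := fun _ => rfl
  have hc'mem : ∀ i, c' i = 0 ∨ c' i = 2 := by
    intro i
    rw [hval i]
    by_cases h1 : i < n
    · rw [if_pos h1]; exact hc i
    · rw [if_neg h1]
      by_cases h2 : i = m
      · rw [if_pos h2]; right; rfl
      · rw [if_neg h2]; left; rfl
  have hy : (∑ i ∈ Finset.range n, c i / 3 ^ (i + 1)) + 2/3^(m+1)
      = ∑ i ∈ Finset.range (m+1), c' i / 3 ^ (i + 1) := by
    rw [Finset.sum_range_succ]
    have hend : c' m / 3^(m+1) = 2/3^(m+1) := by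
      rw [hval m, if_neg (Nat.not_lt.mpr hnm), if_pos rfl]
    rw [hend]
    congr 1
    rw [← Finset.sum_subset (Finset.range_subset_range.mpr hnm)]
    · refine Finset.sum_congr rfl fun i hi => ?_
      rw [hval i, if_pos (Finset.mem_range.mp hi)]
    · intro i hi hni
      have h1 : ¬ i < n := fun h => hni (Finset.mem_range.mpr h)
      have h2 : i ≠ m := Nat.ne_of_lt (Finset.mem_range.mp hi)
      rw [hval i, if_neg h1, if_neg h2]
      simp
  refine ⟨(∑ i ∈ Finset.range n, c i / 3 ^ (i + 1)) + 2/3^(m+1),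
    ⟨m+1, c', hc'mem, hy⟩,
    by have : (0:ℝ) < 2/3^(m+1) := by positivity
       linarith,
    by linarith⟩

/-- H(A₁) is σ-compact but B₁ = ℝ \ A₁ is not scattered in H(A₁). -/
theorem sigmaCompact_A1_and_B1_not_scattered :
    @SigmaCompactSpace ℝ (hattori A1) ∧ ¬ ScatteredIn (hattori A1) B1 := by
  constructor
  · -- σ-compactness
    obtain ⟨f, hf⟩ := B1_countable.exists_eq_range ⟨0, zero_mem_B1⟩
    have hfB : ∀ n, f n ∈ B1 := fun n => hf ▸ Set.mem_range_self n
    have hgap' : ∀ n : ℕ, ∃ γ > 0, ∀ b ∈ B1, b ∉ Set.Ioo (f n - γ) (f n) :=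
      fun n => B1_gap (f n) (hfB n)
    choose γ hγpos hγ using hgap'
    set G := ⋃ n, Set.Ioo (f n - γ n) (f n) with hG
    set K1 : ℕ → Set ℝ := fun n => Set.Icc (-(n:ℝ)) n \ G with hK1
    set K2 : ℕ × ℕ → Set ℝ :=
      fun p => Set.Icc (f p.1 - γ p.1 + γ p.1/(p.2+2)) (f p.1 - γ p.1/(p.2+2)) with hK2
    have hK1comp : ∀ n, @IsCompact ℝ (hattori A1) (K1 n) := by
      intro n
      apply hattori_compact_of_gaps
      · exact isCompact_Icc.diff (isOpen_iUnion fun m => isOpen_Ioo)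
      · intro s hs
        obtain ⟨m, hm⟩ := hf ▸ hs
        refine ⟨γ m, hγpos m, ?_⟩
        rw [Set.eq_empty_iff_forall_notMem]
        rintro z ⟨⟨_, hzG⟩, hz2⟩
        exact hzG (Set.mem_iUnion.mpr ⟨m, hm ▸ hz2⟩)
    have hK2comp : ∀ p, @IsCompact ℝ (hattori A1) (K2 p) := by
      rintro ⟨m, j⟩
      apply hattori_compact_of_gaps isCompact_Icc
      intro s hs
      have hd : (0:ℝ) < γ m / (j+2) := by
        apply div_pos (hγpos m); positivity
      have hsub : K2 (m, j) ⊆ Set.Ioo (f m - γ m) (f m) := by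
        rintro z ⟨hz1, hz2⟩
        constructor <;> simp only [hK2] at hz1 hz2 <;> [linarith; linarith]
      have hs' := hγ m s hs
      rw [Set.mem_Ioo, not_and_or, not_lt, not_lt] at hs'
      rcases hs' with h | h
      · refine ⟨1, one_pos, Set.eq_empty_iff_forall_notMem.mpr ?_⟩
        rintro z ⟨hz1, hz2⟩
        have := hsub hz1
        exact absurd this.1 (by push_neg; linarith [hz2.2])
      · refine ⟨s - (f m - γ m/(j+2)), by linarith, Set.eq_empty_iff_forall_notMem.mpr ?_⟩
        rintro z ⟨hz1, hz2⟩
        have h1 : z ≤ f m - γ m/(j+2) := hz1.2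
        have h2 : f m - γ m/(j+2) < z := by
          have := hz2.1; linarith
        linarith
    have hcover : (Set.univ : Set ℝ) = ⋃ i : ℕ ⊕ ℕ × ℕ, Sum.elim K1 K2 i := by
      apply Set.eq_of_subset_of_subset _ (Set.subset_univ _)
      intro x _
      by_cases hxG : x ∈ G
      · obtain ⟨m, hm⟩ := Set.mem_iUnion.mp hxG
        obtain ⟨hm1, hm2⟩ := hm
        have hd1 : (0:ℝ) < x - (f m - γ m) := by linarith
        have hd2 : (0:ℝ) < f m - x := by linarith
        set d := min (x - (f m - γ m)) (f m - x) with hdd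
        have hdpos : 0 < d := lt_min hd1 hd2
        obtain ⟨J, hJ⟩ := exists_nat_gt (γ m / d)
        have hJ2 : γ m / (J + 2) ≤ d := by
          rw [div_le_iff₀ (by positivity)]
          rw [div_lt_iff₀ hdpos] at hJ
          nlinarith [hdpos]
        refine Set.mem_iUnion.mpr ⟨Sum.inr (m, J), ?_⟩
        simp only [Sum.elim_inr, hK2]
        constructor
        · have := min_le_left (x - (f m - γ m)) (f m - x); linarith
        · have := min_le_right (x - (f m - γ m)) (f m - x); linarith
      · obtain ⟨n, hn⟩ := exists_nat_ge |x|
        refine Set.mem_iUnion.mpr ⟨Sum.inl n, ?_⟩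
        simp only [Sum.elim_inl, hK1]
        refine ⟨?_, hxG⟩
        rw [Set.mem_Icc]
        exact ⟨by linarith [neg_abs_le x], by linarith [le_abs_self x]⟩
    refine @SigmaCompactSpace.mk ℝ (hattori A1) ?_
    rw [hcover]
    exact @isSigmaCompact_iUnion ℝ _ (hattori A1) _ _
      (fun i => by
        cases i with
        | inl n => exact @IsCompact.isSigmaCompact ℝ (hattori A1) _ (hK1comp n)
        | inr p => exact @IsCompact.isSigmaCompact ℝ (hattori A1) _ (hK2comp p))
  · -- not scattered
    intro h
    obtain ⟨x, hxB, U, hUopen, hUint⟩ := h B1 (le_refl _) ⟨0, zero_mem_B1⟩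
    have hxU : x ∈ U := by
      have : x ∈ U ∩ B1 := hUint ▸ Set.mem_singleton x
      exact this.1
    obtain ⟨ε, hε, hIco⟩ := hattori_open_Ico hUopen x hxU
    obtain ⟨y, hyB, hxy, hy2⟩ := B1_right_accum x hxB ε hε
    have hy : y ∈ U ∩ B1 := ⟨hIco ⟨le_of_lt hxy, hy2⟩, hyB⟩
    rw [hUint] at hy
    exact absurd hy (ne_of_gt hxy)
end
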